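/- arXiv:1302.1979 — 4 statements merged into one kernel-verified Lean document; each statement's English description precedes it below -/
import Mathlib

section
/- The family of resolvable subsets of a topological space X is closed under finite intersections. -/
/-!
Say `E` resolves `F` when `F ∩ E` and `F \ E` are both dense in `F`; a set is resolvable iff it
resolves no nonempty closed set. If `E₁ ∩ E₂` resolves a nonempty closed `F`, then `E₁` is dense
in `F`, so by resolvability of `E₁` the complement `F \ E₁` is not dense in `F`: the relatively
open set `U = F \ closure (F \ E₁)` is nonempty. On `U` the sets `E₁ ∩ E₂` and `E₂` agree, and
density passes to relatively open subsets and to closures, so `E₂` resolves the nonempty closed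
set `closure U`, contradicting resolvability of `E₂`.
-/

open Set Topology

def Resolvable {X : Type*} [TopologicalSpace X] (E : Set X) : Prop :=
  ∀ F : Set X, IsClosed F → F.Nonempty → closure (F ∩ E) ∩ closure (F \ E) ≠ F

section

variable {X : Type*} [TopologicalSpace X]

def Resolves (E F : Set X) : Prop :=
  F ⊆ closure (F ∩ E) ∧ F ⊆ closure (F \ E)

theorem Resolvable.not_resolves {E F : Set X} (hE : Resolvable E) (hF : IsClosed F)
    (hne : F.Nonempty) : ¬ Resolves E F := fun ⟨hin, hdiff⟩ =>
  hE F hF hne <| Subset.antisymm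
    (inter_subset_left.trans (closure_minimal inter_subset_left hF)) (subset_inter hin hdiff)

theorem Resolves.open_inter {E F V : Set X} (h : Resolves E F) (hV : IsOpen V) :
    Resolves E (V ∩ F) := by
  constructor
  · calc V ∩ F ⊆ V ∩ closure (F ∩ E) := inter_subset_inter_right V h.1
      _ ⊆ closure (V ∩ (F ∩ E)) := hV.inter_closure
      _ = closure (V ∩ F ∩ E) := by rw [inter_assoc]
  · calc V ∩ F ⊆ V ∩ closure (F \ E) := inter_subset_inter_right V h.2
      _ ⊆ closure (V ∩ (F \ E)) := hV.inter_closure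
      _ = closure ((V ∩ F) \ E) := by rw [inter_sdiff_assoc]

theorem Resolves.to_closure {E F : Set X} (h : Resolves E F) : Resolves E (closure F) := by
  constructor
  · calc closure F ⊆ closure (F ∩ E) := closure_minimal h.1 isClosed_closure
      _ ⊆ closure (closure F ∩ E) := closure_mono (inter_subset_inter_left E subset_closure)
  · calc closure F ⊆ closure (F \ E) := closure_minimal h.2 isClosed_closure
      _ ⊆ closure (closure F \ E) := closure_mono (sdiff_subset_sdiff_left subset_closure)

theorem Resolves.of_inter_eq {E E' F : Set X} (h : Resolves E F) (hEE' : F ∩ E = F ∩ E') :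
    Resolves E' F := by
  refine ⟨hEE' ▸ h.1, ?_⟩
  rw [← sdiff_self_inter, ← hEE', sdiff_self_inter]
  exact h.2

end

theorem resolvable_inter {X : Type*} [TopologicalSpace X] (E₁ E₂ : Set X)
    (h₁ : Resolvable E₁) (h₂ : Resolvable E₂) : Resolvable (E₁ ∩ E₂) := by
  intro F hF hne heq
  have hres : Resolves (E₁ ∩ E₂) F := ⟨heq.superset.trans inter_subset_left,
    heq.superset.trans inter_subset_right⟩
  set U := (closure (F \ E₁))ᶜ ∩ F
  have hU : U.Nonempty := by
    by_contra hempty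
    refine h₁.not_resolves hF hne ⟨?_, fun x hx => ?_⟩
    · exact hres.1.trans (closure_mono (inter_subset_inter_right F inter_subset_left))
    · by_contra hx'
      exact hempty ⟨x, hx', hx⟩
  have hUE₁ : U ⊆ E₁ := fun x ⟨hx, hxF⟩ => by_contra fun hx₁ => hx (subset_closure ⟨hxF, hx₁⟩)
  have hresU : Resolves E₂ U := (hres.open_inter isClosed_closure.isOpen_compl).of_inter_eq <| by
    rw [← inter_assoc, inter_eq_left.mpr hUE₁]
  exact h₂.not_resolves isClosed_closure (hU.mono subset_closure) hresU.to_closure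
end

section
/- Let f : X → Y be a continuous function from a subspace X of the Cantor set onto a metrizable space Y. Then there exists a closed subset Z ⊆ X such that the restriction f|Z is nowhere open on Z (i.e., for every nonempty clopen subset U of X meeting Z, the restriction of f to U ∩ Z is not an open map onto its image), and the restriction f|(X \ Z) is piecewise open. -/
/-!
Fix a countable clopen basis `b` of `X`. Starting from `W₀ = ∅`, enlarge an open set `W_α`
transfinitely by adding every basic set `b n` such that `f` is open onto its image on
`b n \ W_α` (taking unions at limits). A basic set added at stage `α` lies inside all later
`W_β`, so it is added at no other stage; hence the process stops at some `α₀`. The set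
`Z = X \ W_{α₀}` is closed, and `f` is nowhere open on `Z`: a clopen set witnessing the
contrary would contain a basic set that the next stage would still add. Each difference
`W_{α+1} \ W_α` is the disjoint union of the closed sets `b n \ (W_α ∪ ⋃_{m<n} b m)`
(over the `b n` added at stage `α`), on which `f` is open because they are relatively open
in `b n \ W_α`; as every `n` occurs at a single stage, these pieces can be indexed by `n`.
-/

open Set Topology

/-- The Cantor set. -/
abbrev Cantor : Type := ℕ → Bool

/-- `f` restricted to `S` is an open map onto its image: the image of every
relatively open subset of `S` is relatively open in `f '' S`. -/
def OpenOntoImage {X Y : Type*} [TopologicalSpace X] [TopologicalSpace Y]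
    (f : X → Y) (S : Set X) : Prop :=
  ∀ U : Set X, IsOpen U → ∃ V : Set Y, IsOpen V ∧ f '' (U ∩ S) = V ∩ f '' S

/-- `f` is piecewise open on `S`: `S` admits a countable, pairwise disjoint cover by
sets closed in `S`, on each of which `f` is an open map onto its image. -/
def PiecewiseOpenOn {X Y : Type*} [TopologicalSpace X] [TopologicalSpace Y]
    (f : X → Y) (S : Set X) : Prop :=
  ∃ C : ℕ → Set X,
    (∀ n, ∃ F : Set X, IsClosed F ∧ C n = F ∩ S) ∧
    Pairwise (Function.onFun Disjoint C) ∧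
    (⋃ n, C n) = S ∧
    ∀ n, OpenOntoImage f (C n)

/-- `f` is nowhere open on `Z`: for every clopen `U ⊆ X` meeting `Z`, the
restriction of `f` to `U ∩ Z` is not open onto its image. -/
def NowhereOpenOn {X Y : Type*} [TopologicalSpace X] [TopologicalSpace Y]
    (f : X → Y) (Z : Set X) : Prop :=
  ∀ U : Set X, IsClopen U → (U ∩ Z).Nonempty → ¬ OpenOntoImage f (U ∩ Z)

open TopologicalSpace

theorem OpenOntoImage.inter_isOpen {X Y : Type*} [TopologicalSpace X] [TopologicalSpace Y]
    {f : X → Y} {S O : Set X} (hS : OpenOntoImage f S) (hO : IsOpen O) :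
    OpenOntoImage f (O ∩ S) := by
  intro U hU
  obtain ⟨V, hV, hVS⟩ := hS (U ∩ O) (hU.inter hO)
  refine ⟨V, hV, subset_antisymm ?_ ?_⟩
  · rintro _ ⟨x, hx, rfl⟩
    have hfx : f x ∈ V ∩ f '' S := hVS ▸ mem_image_of_mem f (by rwa [inter_assoc])
    exact ⟨hfx.1, x, hx.2, rfl⟩
  · rintro _ ⟨hyV, x, hxOS, rfl⟩
    have : f x ∈ f '' (U ∩ O ∩ S) := hVS ▸ ⟨hyV, x, hxOS.2, rfl⟩
    rwa [inter_assoc] at this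

theorem openOntoImage_empty {X Y : Type*} [TopologicalSpace X] [TopologicalSpace Y]
    (f : X → Y) : OpenOntoImage f ∅ :=
  fun _ _ => ⟨∅, isOpen_empty, by simp⟩

theorem IsClopen.disjointed {X : Type*} [TopologicalSpace X] {s : ℕ → Set X}
    (hs : ∀ n, IsClopen (s n)) (n : ℕ) : IsClopen (disjointed s n) := by
  rw [disjointed_eq_inter_compl]
  exact (hs n).inter ((finite_Iio n).isClopen_biInter fun m _ => (hs m).compl)

theorem iUnion_eq_empty_or_exists_iUnion_eq {α ι : Type*} {s : ι → Set α}
    (h : ∀ i j, (s i).Nonempty → (s j).Nonempty → i = j) :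
    ⋃ i, s i = ∅ ∨ ∃ i, ⋃ j, s j = s i := by
  by_cases hne : ∃ i, (s i).Nonempty
  · obtain ⟨i, hi⟩ := hne
    refine Or.inr ⟨i, subset_antisymm (iUnion_subset fun j x hx => ?_) (subset_iUnion s i)⟩
    rwa [h i j hi ⟨x, hx⟩]
  · push Not at hne
    simp [hne]

section TransfiniteIterate

variable {α J : Type*} [LinearOrder J] [OrderBot J] [SuccOrder J] [WellFoundedLT J]
  {φ : Set α → Set α}

theorem isOpen_transfiniteIterate [TopologicalSpace α] (hφ : ∀ s, IsOpen s → IsOpen (φ s))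
    {s : Set α} (hs : IsOpen s) (j : J) : IsOpen (transfiniteIterate φ j s) := by
  induction j using SuccOrder.limitRecOn with
  | isMin j hj => rwa [hj.eq_bot, transfiniteIterate_bot]
  | succ j hj ih => rw [transfiniteIterate_succ φ s j hj]; exact hφ _ ih
  | isSuccLimit j hj ih =>
    rw [transfiniteIterate_limit φ s j hj]
    exact isOpen_iUnion fun k => ih k.1 k.2

theorem iUnion_transfiniteIterate_succ_diff (hφ : ∀ s, s ⊆ φ s) (j : J) :
    ⋃ k : Iio j, (transfiniteIterate φ (Order.succ k.1) ∅ \ transfiniteIterate φ k.1 ∅) =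
      transfiniteIterate φ j ∅ := by
  refine subset_antisymm (iUnion_subset fun k => sdiff_subset.trans
    (monotone_transfiniteIterate φ ∅ hφ (Order.succ_le_of_lt k.2))) ?_
  induction j using SuccOrder.limitRecOn with
  | isMin j hj => simp [hj.eq_bot]
  | succ j hj ih =>
    intro x hx
    by_cases hxj : x ∈ transfiniteIterate φ j ∅
    · obtain ⟨_, ⟨k, rfl⟩, hxk⟩ := ih hxj
      exact mem_iUnion.2 ⟨⟨k.1, k.2.trans (Order.lt_succ_of_not_isMax hj)⟩, hxk⟩
    · exact mem_iUnion.2 ⟨⟨j, Order.lt_succ_of_not_isMax hj⟩, hx, hxj⟩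
  | isSuccLimit j hj ih =>
    rw [transfiniteIterate_limit φ ∅ j hj]
    rintro x ⟨_, ⟨k, rfl⟩, hxk⟩
    obtain ⟨_, ⟨l, rfl⟩, hxl⟩ := ih k.1 k.2 hxk
    exact mem_iUnion.2 ⟨⟨l.1, l.2.trans k.2⟩, hxl⟩

end TransfiniteIterate

theorem isTopologicalBasis_isClopen_of_isInducing {X Y : Type*} [TopologicalSpace X]
    [TopologicalSpace Y] [T2Space Y] [CompactSpace Y] [TotallyDisconnectedSpace Y] {e : X → Y}
    (he : IsInducing e) : IsTopologicalBasis {s : Set X | IsClopen s} :=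
  (isTopologicalBasis_isClopen.isInducing he).of_isOpen_of_subset (fun _ hs => hs.isOpen)
    (by rintro _ ⟨s, hs, rfl⟩; exact hs.preimage he.continuous)

theorem exists_nat_clopen_basis {X : Type*} [TopologicalSpace X] [SecondCountableTopology X]
    (h : IsTopologicalBasis {s : Set X | IsClopen s}) :
    ∃ b : ℕ → Set X, (∀ n, IsClopen (b n)) ∧ IsTopologicalBasis (range b) := by
  obtain ⟨B, hB_clopen, hB_countable, hB⟩ := h.exists_countable
  obtain ⟨b, hb⟩ := (hB_countable.insert ∅).exists_eq_range (insert_nonempty _ _)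
  refine ⟨b, fun n => ?_, hb ▸ hB.insert_empty⟩
  rcases (hb ▸ mem_range_self n : b n ∈ insert ∅ B) with h₀ | hn
  · exact h₀ ▸ isClopen_empty
  · exact hB_clopen hn

section Exhaustion

variable {X Y : Type*} [TopologicalSpace X] [TopologicalSpace Y] (f : X → Y) (b : ℕ → Set X)

def openBasic (K : Set X) (n : ℕ) : Set X := {x ∈ b n | OpenOntoImage f (b n ∩ K)}

def exhaustionStep (W : Set X) : Set X := W ∪ ⋃ n, openBasic f b Wᶜ n

def exhaustion (α : Ordinal.{0}) : Set X := transfiniteIterate (exhaustionStep f b) α ∅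

def layer (α : Ordinal.{0}) (n : ℕ) : Set X :=
  disjointed (openBasic f b (exhaustion f b α)ᶜ) n \ exhaustion f b α

variable {f b}

theorem isClopen_openBasic (hb : ∀ n, IsClopen (b n)) (K : Set X) (n : ℕ) :
    IsClopen (openBasic f b K n) := by
  by_cases h : OpenOntoImage f (b n ∩ K) <;> simp [openBasic, h, hb n, isClopen_empty]

theorem subset_exhaustionStep (W : Set X) : W ⊆ exhaustionStep f b W := subset_union_left

theorem exhaustion_succ (α : Ordinal.{0}) :
    exhaustion f b (Order.succ α) = exhaustionStep f b (exhaustion f b α) :=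
  transfiniteIterate_succ _ _ _ (not_isMax α)

theorem monotone_exhaustion : Monotone (exhaustion f b) :=
  monotone_transfiniteIterate _ _ subset_exhaustionStep

theorem isOpen_exhaustion (hb : ∀ n, IsClopen (b n)) (α : Ordinal.{0}) :
    IsOpen (exhaustion f b α) :=
  isOpen_transfiniteIterate
    (fun _ hW => hW.union (isOpen_iUnion fun n => (isClopen_openBasic hb _ n).isOpen))
    isOpen_empty α

theorem openBasic_subset_exhaustion_succ (α : Ordinal.{0}) (n : ℕ) :
    openBasic f b (exhaustion f b α)ᶜ n ⊆ exhaustion f b (Order.succ α) := by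
  rw [exhaustion_succ]
  exact (subset_iUnion _ n).trans subset_union_right

theorem subset_exhaustion_of_lt {α β : Ordinal.{0}} {n : ℕ}
    (hn : OpenOntoImage f (b n ∩ (exhaustion f b α)ᶜ)) (hαβ : α < β) :
    b n ⊆ exhaustion f b β :=
  fun _ hx => monotone_exhaustion (Order.succ_le_of_lt hαβ)
    (openBasic_subset_exhaustion_succ α n ⟨hx, hn⟩)

theorem exists_exhaustionStep_eq :
    ∃ α, exhaustionStep f b (exhaustion f b α) = exhaustion f b α := by
  by_contra! h
  have hgrow : ∀ α, ∃ n, ∃ x ∈ openBasic f b (exhaustion f b α)ᶜ n, x ∉ exhaustion f b α := by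
    intro α
    obtain ⟨x, hx, hxα⟩ :=
      not_subset.1 fun hsub => h α (subset_antisymm hsub (subset_exhaustionStep _))
    obtain ⟨_, ⟨n, rfl⟩, hxn⟩ := hx.resolve_left hxα
    exact ⟨n, x, hxn, hxα⟩
  choose g x hxg hx using hgrow
  -- a basic set used at stage `α` is swallowed by every later stage, so `g` is injective
  refine not_injective_of_ordinal g (Function.Injective.of_lt_imp_ne fun α β hαβ hg => ?_)
  exact hx β (subset_exhaustion_of_lt (hxg α).2 hαβ (hg ▸ (hxg β).1))

theorem isClosed_layer (hb : ∀ n, IsClopen (b n)) (α : Ordinal.{0}) (n : ℕ) :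
    IsClosed (layer f b α n) :=
  ((IsClopen.disjointed (isClopen_openBasic hb _) n).isClosed).sdiff (isOpen_exhaustion hb α)

theorem openOntoImage_layer (hb : ∀ n, IsClopen (b n)) (α : Ordinal.{0}) (n : ℕ) :
    OpenOntoImage f (layer f b α n) := by
  have hsub := disjointed_subset (openBasic f b (exhaustion f b α)ᶜ) n
  by_cases h : OpenOntoImage f (b n ∩ (exhaustion f b α)ᶜ)
  · have hlayer : layer f b α n =
        disjointed (openBasic f b (exhaustion f b α)ᶜ) n ∩ (b n ∩ (exhaustion f b α)ᶜ) := by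
      rw [← inter_assoc, inter_eq_left.2 (hsub.trans (sep_subset _ _)), layer, sdiff_eq]
    rw [hlayer]
    exact h.inter_isOpen (IsClopen.disjointed (isClopen_openBasic hb _) n).isOpen
  · have hlayer : layer f b α n = ∅ :=
      eq_empty_of_subset_empty fun _ hx => h (hsub hx.1).2
    rw [hlayer]
    exact openOntoImage_empty f

theorem layer_subset_exhaustion_succ (α : Ordinal.{0}) (n : ℕ) :
    layer f b α n ⊆ exhaustion f b (Order.succ α) :=
  sdiff_subset.trans ((disjointed_subset _ n).trans (openBasic_subset_exhaustion_succ α n))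

theorem iUnion_layer (α : Ordinal.{0}) :
    ⋃ n, layer f b α n = exhaustion f b (Order.succ α) \ exhaustion f b α := by
  simp only [layer, ← iUnion_sdiff, iUnion_disjointed, exhaustion_succ, exhaustionStep,
    union_sdiff_left]

theorem disjoint_layer_of_lt {α β : Ordinal.{0}} (hαβ : α < β) (m n : ℕ) :
    Disjoint (layer f b α m) (layer f b β n) :=
  disjoint_sdiff_left.symm.mono_left
    ((layer_subset_exhaustion_succ α m).trans (monotone_exhaustion (Order.succ_le_of_lt hαβ)))

theorem disjoint_layer {m n : ℕ} (hmn : m ≠ n) (α β : Ordinal.{0}) :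
    Disjoint (layer f b α m) (layer f b β n) := by
  rcases lt_trichotomy α β with h | rfl | h
  · exact disjoint_layer_of_lt h m n
  · exact (disjoint_disjointed _ hmn).mono sdiff_subset sdiff_subset
  · exact (disjoint_layer_of_lt h n m).symm

theorem eq_of_layer_nonempty {α β : Ordinal.{0}} {n : ℕ} (hα : (layer f b α n).Nonempty)
    (hβ : (layer f b β n).Nonempty) : α = β := by
  have key : ∀ {α β : Ordinal.{0}}, α < β → (layer f b α n).Nonempty →
      (layer f b β n).Nonempty → False := by
    rintro α β hαβ ⟨x, hx⟩ ⟨y, hy⟩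
    exact hy.2 (subset_exhaustion_of_lt (disjointed_subset _ n hx.1).2 hαβ
      (disjointed_subset _ n hy.1).1)
  exact le_antisymm (not_lt.1 fun h => key h hβ hα) (not_lt.1 fun h => key h hα hβ)

theorem piecewiseOpenOn_exhaustion (hb : ∀ n, IsClopen (b n)) (α₀ : Ordinal.{0}) :
    PiecewiseOpenOn f (exhaustion f b α₀) := by
  -- each `n` contributes a layer at no more than one stage
  set C : ℕ → Set X := fun n => ⋃ α : Iio α₀, layer f b α n
  have hC : ∀ n, C n = ∅ ∨ ∃ α : Ordinal.{0}, C n = layer f b α n := fun n =>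
    (iUnion_eq_empty_or_exists_iUnion_eq fun α β hα hβ =>
      Subtype.ext (eq_of_layer_nonempty hα hβ)).imp_right fun ⟨α, hα⟩ => ⟨α, hα⟩
  refine ⟨C, fun n => ⟨C n, ?_, ?_⟩, ?_, ?_, fun n => ?_⟩
  · rcases hC n with h | ⟨α, h⟩ <;> rw [h]
    exacts [isClosed_empty, isClosed_layer hb α n]
  · refine (inter_eq_left.2 (iUnion_subset fun α => ?_)).symm
    exact (layer_subset_exhaustion_succ α.1 n).trans
      (monotone_exhaustion (Order.succ_le_of_lt α.2))
  · exact fun m n hmn => disjoint_iUnion_left.2 fun α => disjoint_iUnion_right.2 fun β =>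
      disjoint_layer hmn α β
  · simp only [C]
    rw [iUnion_comm]
    simp only [iUnion_layer]
    exact iUnion_transfiniteIterate_succ_diff subset_exhaustionStep α₀
  · rcases hC n with h | ⟨α, h⟩ <;> rw [h]
    exacts [openOntoImage_empty f, openOntoImage_layer hb α n]

theorem nowhereOpenOn_of_disjoint (hb : IsTopologicalBasis (range b)) {Z : Set X}
    (hZ : ∀ n, OpenOntoImage f (b n ∩ Z) → Disjoint (b n) Z) : NowhereOpenOn f Z := by
  rintro U hU ⟨x, hxU, hxZ⟩ hUZ
  obtain ⟨_, ⟨n, rfl⟩, hxn, hnU⟩ := hb.exists_subset_of_mem_open hxU hU.isOpen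
  have hn : b n ∩ (U ∩ Z) = b n ∩ Z := by rw [← inter_assoc, inter_eq_left.2 hnU]
  exact disjoint_left.1 (hZ n (hn ▸ hUZ.inter_isOpen (hb.isOpen ⟨n, rfl⟩))) hxn hxZ

theorem nowhereOpenOn_compl_exhaustion (hb : IsTopologicalBasis (range b)) {α : Ordinal.{0}}
    (hα : exhaustionStep f b (exhaustion f b α) = exhaustion f b α) :
    NowhereOpenOn f (exhaustion f b α)ᶜ :=
  nowhereOpenOn_of_disjoint hb fun n hn => disjoint_compl_right_iff_subset.2 fun _ hx =>
    hα ▸ subset_union_right (mem_iUnion_of_mem n ⟨hx, hn⟩)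

variable (f) in
theorem exists_isClosed_nowhereOpenOn_piecewiseOpenOn_compl (hb_clopen : ∀ n, IsClopen (b n))
    (hb : IsTopologicalBasis (range b)) :
    ∃ Z : Set X, IsClosed Z ∧ NowhereOpenOn f Z ∧ PiecewiseOpenOn f Zᶜ := by
  obtain ⟨α, hα⟩ := exists_exhaustionStep_eq (f := f) (b := b)
  refine ⟨(exhaustion f b α)ᶜ, (isOpen_exhaustion hb_clopen α).isClosed_compl,
    nowhereOpenOn_compl_exhaustion hb hα, ?_⟩
  rw [compl_compl]
  exact piecewiseOpenOn_exhaustion hb_clopen α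

end Exhaustion

theorem exists_closed_nowhereOpen_piecewiseOpen_compl_general
    (X : Set Cantor) (Y : Type*) [TopologicalSpace Y]
    (f : X → Y) :
    ∃ Z : Set X, IsClosed Z ∧ NowhereOpenOn f Z ∧ PiecewiseOpenOn f Zᶜ := by
  obtain ⟨b, hb_clopen, hb⟩ := exists_nat_clopen_basis
    (isTopologicalBasis_isClopen_of_isInducing (IsInducing.subtypeVal (t := X)))
  exact exists_isClosed_nowhereOpenOn_piecewiseOpenOn_compl f hb_clopen hb

theorem exists_closed_nowhereOpen_piecewiseOpen_compl
    (X : Set Cantor) (Y : Type*) [TopologicalSpace Y]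
    [TopologicalSpace.MetrizableSpace Y]
    (f : X → Y) (hf : Continuous f) (hsurj : Function.Surjective f) :
    ∃ Z : Set X, IsClosed Z ∧ NowhereOpenOn f Z ∧ PiecewiseOpenOn f Zᶜ :=
  exists_closed_nowhereOpen_piecewiseOpen_compl_general X Y f
end

section
/- Let X ⊆ Cantor set and f : X → Y continuous. If the derived set Z obtained by transfinitely removing clopen pieces on which f is open is empty, then f is piecewise open: X is a countable union of pairwise disjoint closed sets on each of which f restricts to an open map. -/
open Set Function TopologicalSpace

def RelClopen {X : Type*} [TopologicalSpace X] (S V : Set X) : Prop :=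
  (∃ W : Set X, IsOpen W ∧ V = W ∩ S) ∧ (∃ W : Set X, IsClosed W ∧ V = W ∩ S)

section Reindexing

variable {T : Type*}

theorem pairwise_disjoint_uncurry {ι κ : Type*} {E : ι → Set T} {D : ι → κ → Set T}
    (hE : Pairwise (Disjoint on E)) (hD : ∀ i, Pairwise (Disjoint on D i))
    (hDE : ∀ i k, D i k ⊆ E i) : Pairwise (Disjoint on uncurry D) := by
  rintro ⟨i, k⟩ ⟨j, l⟩ hne
  obtain rfl | hij := eq_or_ne i j
  · exact hD i fun hkl => hne (congrArg _ hkl)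
  · exact (hE hij).mono (hDE i k) (hDE j l)

theorem exists_nat_pairwise_disjoint_of_countable {P : Set T → Prop} (hP : P ∅)
    {ι : Type*} [Countable ι] {F : ι → Set T} (hF : ∀ i, P (F i))
    (hdisj : Pairwise (Disjoint on F)) :
    ∃ C : ℕ → Set T, (∀ n, P (C n)) ∧ Pairwise (Disjoint on C) ∧ ⋃ n, C n = ⋃ i, F i := by
  have := Encodable.ofCountable ι
  exact ⟨fun n => ⋃ i ∈ Encodable.decode₂ ι n, F i,
    fun _ => Encodable.iUnion_decode₂_cases (C := P) hP hF,
    Encodable.iUnion_decode₂_disjoint_on hdisj, Encodable.iUnion_decode₂ F⟩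

end Reindexing

section OpenOntoImage

variable {T Y : Type*} [TopologicalSpace T] [TopologicalSpace Y]

theorem openOntoImage_empty_s14 (f : T → Y) : OpenOntoImage f ∅ :=
  fun _ _ => ⟨∅, isOpen_empty, by simp⟩

theorem OpenOntoImage.isOpen_inter {f : T → Y} {V O : Set T} (hV : OpenOntoImage f V)
    (hO : IsOpen O) : OpenOntoImage f (O ∩ V) := by
  intro U hU
  obtain ⟨W, hW, hWV⟩ := hV (U ∩ O) (hU.inter hO)
  refine ⟨W, hW, ?_⟩
  calc f '' (U ∩ (O ∩ V)) = f '' (U ∩ O ∩ V) ∩ f '' (O ∩ V) := by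
        rw [← inter_assoc]
        exact (inter_eq_left.2 <| image_mono <| inter_subset_inter_left V inter_subset_right).symm
    _ = W ∩ f '' (O ∩ V) := by
        rw [hWV, inter_assoc, inter_eq_right.2 (image_mono inter_subset_right)]

end OpenOntoImage

section ClopenBasis

variable {T : Type*} [TopologicalSpace T]

theorem TopologicalSpace.IsTopologicalBasis.isClopen_subtype
    (hT : IsTopologicalBasis {s : Set T | IsClopen s}) (p : T → Prop) :
    IsTopologicalBasis {s : Set (Subtype p) | IsClopen s} :=
  (isTopologicalBasis_subtype hT p).of_isOpen_of_subset (fun _ hs => hs.isOpen) <| by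
    rintro _ ⟨s, hs, rfl⟩
    exact hs.preimage continuous_subtype_val

theorem exists_disjoint_clopen_refinement [SecondCountableTopology T]
    (hT : IsTopologicalBasis {s : Set T | IsClopen s}) {ι : Type*} [Nonempty ι]
    {W : ι → Set T} (hW : ∀ i, IsOpen (W i)) :
    ∃ D : ℕ → Set T, (∀ n, IsClopen (D n) ∧ ∃ i, D n ⊆ W i) ∧
      Pairwise (Disjoint on D) ∧ ⋃ n, D n = ⋃ i, W i := by
  obtain ⟨𝓑, h𝓑clopen, h𝓑count, h𝓑⟩ := hT.exists_countable
  set 𝓚 := {B ∈ 𝓑 | ∃ i, B ⊆ W i}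
  have h𝓚 : ⋃₀ 𝓚 = ⋃ i, W i := by
    refine Subset.antisymm (sUnion_subset fun B ⟨_, i, hBi⟩ => hBi.trans (subset_iUnion W i)) ?_
    refine iUnion_subset fun i x hx => ?_
    obtain ⟨B, hB, hxB, hBi⟩ := h𝓑.exists_subset_of_mem_open hx (hW i)
    exact ⟨B, ⟨hB, i, hBi⟩, hxB⟩
  obtain ⟨K, hK⟩ := ((h𝓑count.mono (sep_subset _ _)).insert ∅).exists_eq_range (insert_nonempty _ _)
  have hKprop : ∀ n, IsClopen (K n) ∧ ∃ i, K n ⊆ W i := by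
    intro n
    rcases (hK ▸ mem_range_self n : K n ∈ insert ∅ 𝓚) with hn | ⟨hn, hsub⟩
    · exact ⟨hn ▸ isClopen_empty, Classical.arbitrary ι, hn ▸ empty_subset _⟩
    · exact ⟨h𝓑clopen hn, hsub⟩
  refine ⟨disjointed K, fun n => ⟨?_, ?_⟩, disjoint_disjointed K, ?_⟩
  · exact disjointedRec (fun _ i ht => ht.diff (hKprop i).1) (hKprop n).1
  · exact (hKprop n).2.imp fun i => (disjointed_subset K n).trans
  · rw [iUnion_disjointed, ← sUnion_range, ← hK, sUnion_insert, empty_union, h𝓚]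

end ClopenBasis

section OpenPart

variable {T Y : Type*} [TopologicalSpace T] [TopologicalSpace Y]

/-- The set removed from `S` at one step of the derivation. -/
def openPart (f : T → Y) (S : Set T) : Set T :=
  ⋃₀ {V : Set T | RelClopen S V ∧ OpenOntoImage f V}

theorem openPart_subset (f : T → Y) (S : Set T) : openPart f S ⊆ S :=
  sUnion_subset fun _ ⟨⟨⟨_, _, hV⟩, _⟩, _⟩ => hV ▸ inter_subset_right

theorem exists_isOpen_openPart_eq_inter (f : T → Y) (S : Set T) :
    ∃ O, IsOpen O ∧ openPart f S = O ∩ S := by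
  choose W hW hWV using fun V : {V : Set T // RelClopen S V ∧ OpenOntoImage f V} => V.2.1.1
  refine ⟨⋃ V, W V, isOpen_iUnion hW, ?_⟩
  rw [openPart, sUnion_eq_iUnion, iUnion_inter]
  exact iUnion_congr hWV

theorem IsClosed.diff_openPart {S : Set T} (hS : IsClosed S) (f : T → Y) :
    IsClosed (S \ openPart f S) := by
  obtain ⟨O, hO, hOS⟩ := exists_isOpen_openPart_eq_inter f S
  rw [hOS, sdiff_inter_self_eq_sdiff]
  exact hS.sdiff hO

theorem exists_disjoint_closed_cover_openPart [SecondCountableTopology T]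
    (hT : IsTopologicalBasis {s : Set T | IsClopen s}) (f : T → Y) {S : Set T}
    (hS : IsClosed S) :
    ∃ D : ℕ → Set T, (∀ n, IsClosed (D n) ∧ OpenOntoImage f (D n)) ∧
      Pairwise (Disjoint on D) ∧ ⋃ n, D n = openPart f S := by
  let ι := {V : Set T // RelClopen S V ∧ OpenOntoImage f V}
  have : Nonempty ι := ⟨⟨∅, ⟨⟨∅, isOpen_empty, by simp⟩, ⟨∅, isClosed_empty, by simp⟩⟩,
    openOntoImage_empty_s14 f⟩⟩
  choose W hW hWV using fun V : ι => V.2.1.1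
  obtain ⟨D, hD, hdisj, hunion⟩ := exists_disjoint_clopen_refinement hT hW
  refine ⟨fun n => D n ∩ S, fun n => ⟨(hD n).1.isClosed.inter hS, ?_⟩,
    fun m n hmn => (hdisj hmn).mono inter_subset_left inter_subset_left, ?_⟩
  · obtain ⟨V, hDV⟩ := (hD n).2
    have hDS : D n ∩ S = D n ∩ V := by rw [hWV V, ← inter_assoc, inter_eq_left.2 hDV]
    change OpenOntoImage f (D n ∩ S)
    rw [hDS]
    exact V.2.2.isOpen_inter (hD n).1.isOpen
  · rw [← iUnion_inter, hunion, iUnion_inter, openPart, sUnion_eq_iUnion]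
    exact (iUnion_congr hWV).symm

end OpenPart

section Derivation

variable {T : Type*}

theorem Antitone.pairwise_disjoint_diff_succ {ι : Type*} [LinearOrder ι] [SuccOrder ι]
    {A : ι → Set T} (hA : Antitone A) : Pairwise (Disjoint on fun i => A i \ A (Order.succ i)) :=
  (pairwise_disjoint_on _).2 fun _ _ hij => disjoint_left.2 fun _ hxi hxj =>
    hxi.2 (hA (Order.succ_le_of_lt hij) hxj.1)

/-- A basic open set meeting `A i` but missing `A (succ i)` records the step `i`. -/
theorem Antitone.countable_setOf_nonempty_diff_succ [TopologicalSpace T]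
    [SecondCountableTopology T] {ι : Type*} [LinearOrder ι] [SuccOrder ι] {A : ι → Set T}
    (hA : Antitone A) (hclosed : ∀ i, IsClosed (A (Order.succ i))) :
    {i | (A i \ A (Order.succ i)).Nonempty}.Countable := by
  set S := {i | (A i \ A (Order.succ i)).Nonempty}
  have hbasic : ∀ i ∈ S, ∃ B ∈ countableBasis T,
      (B ∩ A i).Nonempty ∧ Disjoint B (A (Order.succ i)) := by
    rintro i ⟨x, hxi, hxs⟩
    obtain ⟨B, hB, hxB, hBs⟩ :=
      (isBasis_countableBasis T).exists_subset_of_mem_open hxs (hclosed i).isOpen_compl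
    exact ⟨B, hB, ⟨x, hxB, hxi⟩, subset_compl_iff_disjoint_right.1 hBs⟩
  choose! B hB hmeet hdisj using hbasic
  have hne : ∀ i ∈ S, ∀ j ∈ S, i < j → B i ≠ B j := by
    intro i hi j hj hij hBij
    obtain ⟨x, hxB, hxj⟩ := hmeet j hj
    exact disjoint_left.1 (hdisj i hi) (hBij ▸ hxB) (hA (Order.succ_le_of_lt hij) hxj)
  refine MapsTo.countable_of_injOn hB (fun i hi j hj hBij => ?_) (countable_countableBasis T)
  rcases lt_trichotomy i j with hij | hij | hij
  · exact absurd hBij (hne i hi j hj hij)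
  · exact hij
  · exact absurd hBij.symm (hne j hj i hi hij)

variable {A : Ordinal → Set T}
  (hlim : ∀ α, Order.IsSuccLimit α → A α = ⋂ β, ⋂ (_ : β < α), A β)
include hlim

theorem antitone_of_limit (hsucc : ∀ α, A (α + 1) ⊆ A α) : Antitone A := by
  intro β α hβα
  induction α using Ordinal.limitRecOn with
  | zero => rw [nonpos_iff_eq_zero.1 hβα]
  | add_one α ih =>
    rcases Order.le_succ_iff_eq_or_le.1 (Order.succ_eq_add_one α ▸ hβα) with rfl | hβα
    · rw [Order.succ_eq_add_one]
    · exact (hsucc α).trans (ih hβα)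
  | limit α hα ih =>
    obtain rfl | hβα := hβα.eq_or_lt
    · rfl
    · rw [hlim α hα]
      exact iInter₂_subset β hβα

theorem isClosed_of_limit [TopologicalSpace T] (h0 : IsClosed (A 0))
    (hsucc : ∀ α, IsClosed (A α) → IsClosed (A (α + 1))) (α : Ordinal) : IsClosed (A α) := by
  induction α using Ordinal.limitRecOn with
  | zero => exact h0
  | add_one α ih => exact hsucc α ih
  | limit α hα ih =>
    rw [hlim α hα]
    exact isClosed_biInter ih

theorem exists_mem_diff_succ_of_limit {x : T} (hx0 : x ∈ A 0) {γ : Ordinal} (hxγ : x ∉ A γ) :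
    ∃ α, x ∈ A α \ A (α + 1) := by
  by_contra! hstay
  simp only [mem_sdiff, not_and, not_not] at hstay
  suffices ∀ α, x ∈ A α from hxγ (this γ)
  intro α
  induction α using Ordinal.limitRecOn with
  | zero => exact hx0
  | add_one α ih => exact hstay α ih
  | limit α hα ih =>
    rw [hlim α hα]
    exact mem_iInter₂.2 ih

end Derivation

theorem piecewise_open_of_derived_set_empty_general
    (X : Set Cantor) (Y : Type*) [TopologicalSpace Y]
    (f : X → Y)
    (Xseq : Ordinal → Set X)
    (h0 : Xseq 0 = univ)
    (hsucc : ∀ α : Ordinal,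
      Xseq (α + 1) =
        Xseq α \ ⋃₀ {V : Set X | RelClopen (Xseq α) V ∧ OpenOntoImage f V})
    (hlim : ∀ α : Ordinal, Order.IsSuccLimit α → Xseq α = ⋂ β : Ordinal, ⋂ (_ : β < α), Xseq β)
    (γ : Ordinal) (hγ : Xseq γ = ∅) :
    ∃ C : ℕ → Set X,
      (∀ n, IsClosed (C n)) ∧
      Pairwise (Function.onFun Disjoint C) ∧
      (⋃ n, C n) = univ ∧
      ∀ n, OpenOntoImage f (C n) := by
  have hT : IsTopologicalBasis {s : Set X | IsClopen s} :=
    isTopologicalBasis_isClopen.isClopen_subtype (· ∈ X)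
  have hsucc' : ∀ α, Xseq (α + 1) = Xseq α \ openPart f (Xseq α) := hsucc
  have hanti : Antitone Xseq := antitone_of_limit hlim fun α => (hsucc' α).trans_subset sdiff_subset
  have hclosed : ∀ α, IsClosed (Xseq α) :=
    isClosed_of_limit hlim (h0 ▸ isClosed_univ) fun α h => hsucc' α ▸ h.diff_openPart f
  have hstep : ∀ α, Xseq α \ Xseq (Order.succ α) = openPart f (Xseq α) := fun α => by
    rw [Order.succ_eq_add_one, hsucc', sdiff_sdiff_cancel_left (openPart_subset f _)]
  choose D hD hDdisj hDunion using fun α => exists_disjoint_closed_cover_openPart hT f (hclosed α)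
  let S := {α | (Xseq α \ Xseq (Order.succ α)).Nonempty}
  have : Countable S := (hanti.countable_setOf_nonempty_diff_succ fun α => hclosed _).to_subtype
  obtain ⟨C, hC, hCdisj, hCunion⟩ :=
    exists_nat_pairwise_disjoint_of_countable (P := fun s => IsClosed s ∧ OpenOntoImage f s)
      ⟨isClosed_empty, openOntoImage_empty_s14 f⟩ (F := uncurry fun α : S => D α)
      (fun p => hD p.1 p.2) <|
      pairwise_disjoint_uncurry (fun α β hαβ => hanti.pairwise_disjoint_diff_succ
        (Subtype.coe_injective.ne hαβ)) (fun α => hDdisj α)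
        fun α n => (subset_iUnion (D α) n).trans ((hDunion α).trans (hstep α).symm).subset
  refine ⟨C, fun n => (hC n).1, hCdisj, eq_univ_of_forall fun x => ?_, fun n => (hC n).2⟩
  obtain ⟨α, hα⟩ := exists_mem_diff_succ_of_limit hlim (h0 ▸ mem_univ x) (hγ ▸ notMem_empty x)
  rw [← Order.succ_eq_add_one] at hα
  obtain ⟨n, hn⟩ := mem_iUnion.1 ((hDunion α).symm ▸ hstep α ▸ hα)
  exact hCunion ▸ mem_iUnion.2 ⟨(⟨α, x, hα⟩, n), hn⟩

/-- If the transfinite derived sequence reaches the empty set, then `f` is piecewise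
open: `X` is a countable union of pairwise disjoint closed sets on each of which `f`
restricts to an open map onto its image. -/
theorem piecewise_open_of_derived_set_empty
    (X : Set Cantor) (Y : Type*) [TopologicalSpace Y]
    (f : X → Y) (hf : Continuous f)
    (Xseq : Ordinal → Set X)
    (h0 : Xseq 0 = univ)
    (hsucc : ∀ α : Ordinal,
      Xseq (α + 1) =
        Xseq α \ ⋃₀ {V : Set X | RelClopen (Xseq α) V ∧ OpenOntoImage f V})
    (hlim : ∀ α : Ordinal, Order.IsSuccLimit α → Xseq α = ⋂ β : Ordinal, ⋂ (_ : β < α), Xseq β)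
    (γ : Ordinal) (hγ : Xseq γ = ∅) :
    ∃ C : ℕ → Set X,
      (∀ n, IsClosed (C n)) ∧
      Pairwise (Function.onFun Disjoint C) ∧
      (⋃ n, C n) = univ ∧
      ∀ n, OpenOntoImage f (C n) :=
  piecewise_open_of_derived_set_empty_general X Y f Xseq h0 hsucc hlim γ hγ
end

section
/- Let Z be a nonempty subspace of the Cantor set without isolated points and f : Z → Y a continuous map to a metric space such that f is nowhere open on Z (for every nonempty clopen U ⊆ Z, f|U is not open onto its image). Then for every point x ∈ Z and every neighborhood U of x, there exist points x_k ∈ U ∩ Z with x_k → x and points p_{k,l} ∈ f(Z) with p_{k,l} → f(x_k) as l → ∞ such that f⁻¹(p_{k,l}) is disjoint from a fixed neighborhood of x_k. -/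
open Set Topology Filter

/-!
Call `f` open at `z` if `f` maps neighbourhoods of `z` onto neighbourhoods of `f z` relative to
`range f`. A map that is open at every point of an open set `S` is open from `S` onto `f '' S`, so
every nonempty clopen set contains a point where `f` is not open; since the clopen sets form a basis
of `Z`, these points are dense, and a sequence of them converges to `x` inside `U`. At such a point
`xₖ` there is a neighbourhood `Wₖ` with `f xₖ ∈ closure (range f \ f '' Wₖ)`, and the points
`pₖₗ` are a sequence in `range f \ f '' Wₖ` converging to `f xₖ`.
-/

namespace TopologicalSpace

variable {X : Type*} [TopologicalSpace X]

theorem IsTopologicalBasis.isClopen_subtype_s15 (hX : IsTopologicalBasis {s : Set X | IsClopen s})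
    (Z : Set X) : IsTopologicalBasis {s : Set Z | IsClopen s} := by
  refine (hX.isInducing IsInducing.subtypeVal).of_isOpen_of_subset (fun _ hs => hs.isOpen) ?_
  rintro _ ⟨s, hs, rfl⟩
  exact hs.preimage continuous_subtype_val

end TopologicalSpace

open TopologicalSpace

section OpenAt

variable {X Y : Type*} [TopologicalSpace X] [TopologicalSpace Y]

def IsOpenAt (f : X → Y) (z : X) : Prop :=
  ∀ W ∈ 𝓝 z, f '' W ∈ 𝓝[range f] (f z)

theorem not_isOpenAt_iff {f : X → Y} {z : X} :
    ¬ IsOpenAt f z ↔ ∃ W ∈ 𝓝 z, f z ∈ closure (range f \ f '' W) := by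
  simp only [IsOpenAt, mem_nhdsWithin_iff_eventually, mem_closure_iff_frequently,
    Filter.not_eventually, not_forall, exists_prop, Set.mem_sdiff]

theorem exists_isOpen_inter_eq_of_forall_mem_nhdsWithin {s t : Set Y}
    (h : ∀ y ∈ t, t ∈ 𝓝[s] y) : ∃ V, IsOpen V ∧ V ∩ s = t ∩ s := by
  choose! u hu_open hu_mem hu_sub using fun y hy => mem_nhdsWithin.1 (h y hy)
  refine ⟨⋃ y ∈ t, u y, isOpen_biUnion hu_open, subset_antisymm ?_ ?_⟩
  · rintro z ⟨hz, hzs⟩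
    obtain ⟨y, hy, hzy⟩ := mem_iUnion₂.1 hz
    exact ⟨hu_sub y hy ⟨hzy, hzs⟩, hzs⟩
  · rintro z ⟨hzt, hzs⟩
    exact ⟨mem_iUnion₂.2 ⟨z, hzt, hu_mem z hzt⟩, hzs⟩

theorem openOntoImage_of_forall_isOpenAt {f : X → Y} {S : Set X} (hS : IsOpen S)
    (h : ∀ z ∈ S, IsOpenAt f z) : OpenOntoImage f S := by
  intro U hU
  have hnhds : ∀ y ∈ f '' (U ∩ S), f '' (U ∩ S) ∈ 𝓝[range f] y := by
    rintro _ ⟨z, hz, rfl⟩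
    exact h z hz.2 _ ((hU.inter hS).mem_nhds hz)
  obtain ⟨V, hV, hVeq⟩ := exists_isOpen_inter_eq_of_forall_mem_nhdsWithin hnhds
  refine ⟨V, hV, ?_⟩
  rw [← inter_eq_right.2 (image_subset_range f S), ← inter_assoc, hVeq,
    inter_eq_left.2 (image_subset_range f _), inter_eq_left.2 (image_mono inter_subset_right)]

theorem dense_setOf_not_isOpenAt (hX : IsTopologicalBasis {s : Set X | IsClopen s})
    {f : X → Y} (hnw : ∀ U : Set X, IsClopen U → U.Nonempty → ¬ OpenOntoImage f U) :
    Dense {z | ¬ IsOpenAt f z} := by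
  refine hX.dense_iff.2 fun U hU hne => ?_
  by_contra hempty
  refine hnw U hU hne (openOntoImage_of_forall_isOpenAt hU.isOpen fun z hz => ?_)
  by_contra hz'
  exact hempty ⟨z, hz, hz'⟩

end OpenAt

theorem nowhere_open_inductive_step_general
    (Z : Set Cantor)
    (Y : Type*) [MetricSpace Y]
    (f : Z → Y)
    (hnw : ∀ U : Set Z, IsClopen U → U.Nonempty → ¬ OpenOntoImage f U) :
    ∀ x : Z, ∀ U ∈ 𝓝 x,
      ∃ xk : ℕ → Z,
        (∀ k, xk k ∈ U) ∧
        Tendsto xk atTop (𝓝 x) ∧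
        ∃ (p : ℕ → ℕ → Y) (W : ℕ → Set Z),
          (∀ k, W k ∈ 𝓝 (xk k)) ∧
          (∀ k l, p k l ∈ Set.range f) ∧
          (∀ k, Tendsto (fun l => p k l) atTop (𝓝 (f (xk k)))) ∧
          (∀ k l, f ⁻¹' {p k l} ∩ W k = ∅) := by
  intro x U hU
  have hdense := dense_setOf_not_isOpenAt (isTopologicalBasis_isClopen.isClopen_subtype_s15 Z) hnw
  have hx : x ∈ closure (U ∩ {z | ¬ IsOpenAt f z}) := mem_closure_iff_nhds.2 fun t ht =>
    (hdense.inter_nhds_nonempty (inter_mem ht hU)).mono fun _ hz => ⟨hz.2.1, hz.2.2, hz.1⟩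
  obtain ⟨xk, hxk, hlim⟩ := mem_closure_iff_seq_limit.1 hx
  choose W hW hWcl using fun k => not_isOpenAt_iff.1 (hxk k).2
  choose p hp hplim using fun k => mem_closure_iff_seq_limit.1 (hWcl k)
  refine ⟨xk, fun k => (hxk k).1, hlim, p, W, hW, fun k l => (hp k l).1, hplim, fun k l => ?_⟩
  exact eq_empty_of_forall_notMem fun w hw => (hp k l).2 ⟨w, hw.2, hw.1⟩

theorem nowhere_open_inductive_step
    (Z : Set Cantor) (hne : Z.Nonempty)
    (hperf : ∀ z : Z, (𝓝[≠] z).NeBot)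
    (Y : Type*) [MetricSpace Y]
    (f : Z → Y) (hf : Continuous f)
    (hnw : ∀ U : Set Z, IsClopen U → U.Nonempty → ¬ OpenOntoImage f U) :
    ∀ x : Z, ∀ U ∈ 𝓝 x,
      ∃ xk : ℕ → Z,
        (∀ k, xk k ∈ U) ∧
        Tendsto xk atTop (𝓝 x) ∧
        ∃ (p : ℕ → ℕ → Y) (W : ℕ → Set Z),
          (∀ k, W k ∈ 𝓝 (xk k)) ∧
          (∀ k l, p k l ∈ Set.range f) ∧
          (∀ k, Tendsto (fun l => p k l) atTop (𝓝 (f (xk k)))) ∧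
          (∀ k l, f ⁻¹' {p k l} ∩ W k = ∅) :=
  nowhere_open_inductive_step_general Z Y f hnw
end
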